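/- arXiv:1711.03515 — 2 statements merged into one kernel-verified Lean document; each statement's English description precedes it below -/
import Mathlib

section
/- Let g ∈ R be a right divisor of x^n − 1 of degree < n, and let C ⊆ L^n be the skew cyclic code it defines. Suppose there exist integers b ≥ 0, δ with 2 ≤ δ ≤ n, and t with gcd(t, n) = 1, such that {b, b+t, b+2t, …, b+(δ−2)t mod n} ⊆ T_β(g). Then the minimum Hamming distance of C is at least δ (BCH bound for skew cyclic codes). -/
/-! Skew polynomials over a field `M` twisted by a ring automorphism `θ` (`x·a = θ(a)·x`),
modeled as finitely supported functions `ℕ →₀ M` (coefficient of `xⁱ` at `i`),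
with left-coefficient multiplication `(Σᵢ aᵢ xⁱ)·(Σⱼ bⱼ xʲ) = Σᵢⱼ aᵢ θⁱ(bⱼ) x^{i+j}`. -/

variable {M : Type*} [Field M]

/-- Multiplication of skew polynomials: `f * g` in `M[x;θ]`. -/
noncomputable def sMul (θ : M ≃+* M) (f g : ℕ →₀ M) : ℕ →₀ M :=
  f.sum fun i a => g.sum fun j b => Finsupp.single (i + j) (a * (θ ^ i) b)

/-- The skew polynomial `x - γ`. -/
noncomputable def Xsub (γ : M) : ℕ →₀ M := Finsupp.single 1 1 - Finsupp.single 0 γ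

/-- The skew polynomial `xⁿ - 1`. -/
noncomputable def XnSubOne (n : ℕ) : ℕ →₀ M := Finsupp.single n 1 - Finsupp.single 0 1

/-- The left ideal `S·f = {q·f : q ∈ S}` of `S = M[x;θ]`. -/
def lIdeal (θ : M ≃+* M) (f : ℕ →₀ M) : Set (ℕ →₀ M) := {h | ∃ q, h = sMul θ q f}

/-- `g` right-divides `f` in `M[x;θ]`, i.e. `f ∈ S·g`. -/
def rdvd (θ : M ≃+* M) (g f : ℕ →₀ M) : Prop := f ∈ lIdeal θ g

/-- The fixed subfield of an automorphism. -/
noncomputable def fixedSubfield (φ : M ≃+* M) : Subfield M where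
  carrier := {a | φ a = a}
  zero_mem' := map_zero φ
  one_mem' := map_one φ
  add_mem' := by intro a b ha hb; simp only [Set.mem_setOf_eq, map_add] at *; rw [ha, hb]
  mul_mem' := by intro a b ha hb; simp only [Set.mem_setOf_eq, map_mul] at *; rw [ha, hb]
  neg_mem' := by intro a ha; simp only [Set.mem_setOf_eq, map_neg] at *; rw [ha]
  inv_mem' := by intro a ha; simp only [Set.mem_setOf_eq, map_inv₀] at *; rw [ha]

/-- A skew polynomial lies in the subring `R` of polynomials whose coefficients are fixed
by the automorphism `φ` (for `φ = θ^μ = π`, this is `R = L[x;σ]` with `L = M^π`). -/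
def inR (φ : M ≃+* M) (f : ℕ →₀ M) : Prop := ∀ j, φ (f j) = f j

/-- The polynomial of degree `< n` with coefficient vector `c`. -/
noncomputable def vecPoly {n : ℕ} (c : Fin n → M) : ℕ →₀ M :=
  ∑ j : Fin n, Finsupp.single (j : ℕ) (c j)

/-- Hamming weight of a vector. -/
noncomputable def hWt {n : ℕ} (c : Fin n → M) : ℕ := Set.ncard {j : Fin n | c j ≠ 0}

/-- `α` generates a normal basis `{α, θ(α), …, θ^{n-1}(α)}` of `M` over `K = M^θ`. -/
def NormalBasis (θ : M ≃+* M) (n : ℕ) (α : M) : Prop :=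
  LinearIndependent (fixedSubfield θ) (fun i : Fin n => (θ ^ (i : ℕ)) α) ∧
    Submodule.span (fixedSubfield θ) (Set.range fun i : Fin n => (θ ^ (i : ℕ)) α) = ⊤

/-- `f` is monic of degree `d`. -/
def IsMonicAt (f : ℕ →₀ M) (d : ℕ) : Prop := f d = 1 ∧ ∀ j, d < j → f j = 0

/-- `f` is monic. -/
def IsMonic (f : ℕ →₀ M) : Prop := ∃ d, IsMonicAt f d

/-- Coefficientwise application of an automorphism to a skew polynomial (`f ↦ f^φ`). -/
noncomputable def pmap (φ : M ≃+* M) (f : ℕ →₀ M) : ℕ →₀ M :=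
  Finsupp.mapRange φ (map_zero φ) f

/-! A codeword `c` vanishes, in the sense of right division, at the roots `θ^{b+it}(β)`, and since
`β = α⁻¹θ(α)` these vanishing conditions read `∑ⱼ cⱼ (θᵗ)ⁱ(θ^{b+j}(α)) = 0` for `i ≤ δ - 2`.
The vectors `θ^{b+j}(α)` are linearly independent over `M^θ`, which is also the fixed field of
`θᵗ` because `t` is prime to the order of `θ`. A Moore-matrix argument then shows that a solution
supported on fewer than `δ` coordinates is zero. -/

open Finset

section SkewEvaluation

variable (θ : M ≃+* M)

/-- `xᵏ ≡ nNorm θ γ k` modulo the left ideal `S·(x - γ)`. -/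
noncomputable def nNorm (γ : M) (k : ℕ) : M :=
  ∏ l ∈ range k, (θ ^ l) γ

theorem nNorm_add (γ : M) (i j : ℕ) :
    nNorm θ γ (i + j) = nNorm θ γ i * (θ ^ i) (nNorm θ γ j) := by
  simp only [nNorm, prod_range_add, map_prod, pow_add, RingAut.mul_apply]

theorem nNorm_inv_mul_apply {a : M} (ha : a ≠ 0) (k : ℕ) :
    nNorm θ (a⁻¹ * θ a) k = a⁻¹ * (θ ^ k) a := by
  induction k with
  | zero => simp [nNorm, ha]
  | succ k ih =>
    have hk : (θ ^ k) a ≠ 0 := (map_ne_zero _).mpr ha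
    rw [nNorm, prod_range_succ, ← nNorm, ih, map_mul, map_inv₀, pow_succ, RingAut.mul_apply]
    field_simp

/-- The remainder of `f` on right division by `x - γ`. -/
noncomputable def skewEval (γ : M) : (ℕ →₀ M) →+ M :=
  Finsupp.liftAddHom fun k => AddMonoidHom.mulRight (nNorm θ γ k)

theorem skewEval_apply (γ : M) (f : ℕ →₀ M) :
    skewEval θ γ f = f.sum fun k a => a * nNorm θ γ k :=
  Finsupp.liftAddHom_apply _ _

theorem skewEval_single (γ : M) (k : ℕ) (a : M) :
    skewEval θ γ (Finsupp.single k a) = a * nNorm θ γ k := by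
  simp [skewEval]

theorem skewEval_sMul (γ : M) (f g : ℕ →₀ M) :
    skewEval θ γ (sMul θ f g) = f.sum fun i a => a * nNorm θ γ i * (θ ^ i) (skewEval θ γ g) := by
  rw [sMul, map_finsuppSum]
  refine Finsupp.sum_congr fun i _ => ?_
  rw [map_finsuppSum, skewEval_apply θ γ g, Finsupp.sum, Finsupp.sum, map_sum, mul_sum]
  refine sum_congr rfl fun j _ => ?_
  rw [skewEval_single, nNorm_add, map_mul]
  ring

theorem skewEval_eq_zero_of_rdvd {γ : M} {g f : ℕ →₀ M} (hg : skewEval θ γ g = 0)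
    (hgf : rdvd θ g f) : skewEval θ γ f = 0 := by
  obtain ⟨q, rfl⟩ := hgf
  simp [skewEval_sMul, hg, Finsupp.sum]

theorem skewEval_Xsub (γ : M) : skewEval θ γ (Xsub γ) = 0 := by
  simp [Xsub, skewEval_single, nNorm]

theorem skewEval_vecPoly {n : ℕ} (γ : M) (c : Fin n → M) :
    skewEval θ γ (vecPoly c) = ∑ j, c j * nNorm θ γ j := by
  simp [vecPoly, skewEval_single]

theorem sum_mul_pow_apply_eq_zero_of_rdvd {a : M} (ha : a ≠ 0) {g : ℕ →₀ M}
    (hg : rdvd θ (Xsub (a⁻¹ * θ a)) g) {n : ℕ} {c : Fin n → M} (hc : rdvd θ g (vecPoly c)) :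
    ∑ j, c j * (θ ^ (j : ℕ)) a = 0 := by
  have h := skewEval_eq_zero_of_rdvd θ (skewEval_eq_zero_of_rdvd θ (skewEval_Xsub θ _) hg) hc
  simp only [skewEval_vecPoly, nNorm_inv_mul_apply θ ha] at h
  calc ∑ j, c j * (θ ^ (j : ℕ)) a = a * ∑ j, c j * (a⁻¹ * (θ ^ (j : ℕ)) a) := by
        rw [mul_sum]; refine sum_congr rfl fun j _ => ?_; field_simp
    _ = 0 := by rw [h, mul_zero]

end SkewEvaluation

section Moore

variable (φ : M ≃+* M) {ι : Type*}

theorem pow_apply_eq_self_of_apply_eq_self {a : M} (h : φ a = a) (m : ℕ) : (φ ^ m) a = a := by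
  induction m with
  | zero => rfl
  | succ m ih => rw [pow_succ, RingAut.mul_apply, h, ih]

theorem fixedSubfield_pow_of_coprime {t : ℕ} (ht : t.Coprime (orderOf φ)) :
    fixedSubfield (φ ^ t) = fixedSubfield φ := by
  obtain ⟨m, hm⟩ := exists_pow_eq_self_of_coprime ht
  ext a
  constructor
  · intro h
    change φ a = a
    rw [← hm]
    exact pow_apply_eq_self_of_apply_eq_self _ h m
  · exact fun h => pow_apply_eq_self_of_apply_eq_self φ h t

def fixedSubfieldLinearMap : M →ₗ[fixedSubfield φ] M where
  toFun := φ
  map_add' := map_add φ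
  map_smul' k x := by
    simp only [Subfield.smul_def, smul_eq_mul, map_mul, RingHom.id_apply]
    rw [show φ k = k from k.2]

theorem LinearIndependent.map_fixedSubfield {v : ι → M}
    (hv : LinearIndependent (fixedSubfield φ) v) : LinearIndependent (fixedSubfield φ) (φ ∘ v) :=
  hv.map' (fixedSubfieldLinearMap φ) (LinearMap.ker_eq_bot.mpr φ.injective)

theorem LinearIndependent.eq_zero_of_fixed_of_sum_mul_eq_zero {v : ι → M}
    (hv : LinearIndependent (fixedSubfield φ) v) (T : Finset ι) {d : ι → M}
    (hfix : ∀ m ∈ T, φ (d m) = d m) (hsum : ∑ m ∈ T, d m * v m = 0) : ∀ m ∈ T, d m = 0 := by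
  classical
  intro m hm
  let k : ι → fixedSubfield φ := fun m => if h : m ∈ T then ⟨d m, hfix m h⟩ else 0
  have hk : ∑ m ∈ T, k m • v m = 0 := by
    rw [← hsum]
    refine sum_congr rfl fun m hm => ?_
    simp [k, hm, Subfield.smul_def]
  simpa [k, hm] using congrArg Subtype.val (linearIndependent_iff'.mp hv T k hk m hm)

theorem eq_zero_of_sum_mul_pow_apply_eq_zero {v : ι → M}
    (hv : LinearIndependent (fixedSubfield φ) v) (T : Finset ι) {d : ι → M}
    (hd : ∀ i < #T, ∑ m ∈ T, d m * (φ ^ i) (v m) = 0) : ∀ m ∈ T, d m = 0 := by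
  classical
  induction T using Finset.strongInduction generalizing v d with
  | H T ih =>
  by_contra! ⟨m₀, hm₀, hd₀⟩
  set d' : ι → M := fun m => d m / d m₀
  have hd'₀ : d' m₀ = 1 := div_self hd₀
  have hd' : ∀ i < #T, ∑ m ∈ T, d' m * (φ ^ i) (v m) = 0 := fun i hi => by
    simp only [d', div_mul_eq_mul_div, ← sum_div, hd i hi, zero_div]
  -- The defects `φ (d' m) - d' m` vanish at `m₀` and solve the system for `φ ∘ v`.
  have he : ∀ i < #(T.erase m₀),
      ∑ m ∈ T.erase m₀, (φ (d' m) - d' m) * (φ ^ i) ((φ ∘ v) m) = 0 := by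
    intro i hi
    rw [card_erase_of_mem hm₀] at hi
    have hshift : ∑ m ∈ T, φ (d' m) * (φ ^ (i + 1)) (v m) = φ (∑ m ∈ T, d' m * (φ ^ i) (v m)) := by
      simp only [map_sum, map_mul, pow_succ', RingAut.mul_apply]
    rw [sum_erase T (by simp [hd'₀])]
    simp only [Function.comp_apply, ← RingAut.mul_apply, ← pow_succ, sub_mul, sum_sub_distrib,
      hshift, hd' i (by omega), hd' (i + 1) (by omega), map_zero, sub_zero]
  have hfix : ∀ m ∈ T, φ (d' m) = d' m := by
    intro m hm
    rcases eq_or_ne m m₀ with rfl | hne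
    · simp [hd'₀]
    · exact sub_eq_zero.mp (ih _ (erase_ssubset hm₀) (hv.map_fixedSubfield φ) he m
        (mem_erase.mpr ⟨hne, hm⟩))
  have hsum : ∑ m ∈ T, d' m * v m = 0 := by
    simpa using hd' 0 (card_pos.mpr ⟨m₀, hm₀⟩)
  simpa [hd'₀] using hv.eq_zero_of_fixed_of_sum_mul_eq_zero φ T hfix hsum m₀ hm₀

theorem lt_ncard_support_of_sum_mul_pow_apply_eq_zero [Fintype ι] {v : ι → M}
    (hv : LinearIndependent (fixedSubfield φ) v) {d : ι → M} (hd₀ : d ≠ 0) {k : ℕ}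
    (hd : ∀ i < k, ∑ m, d m * (φ ^ i) (v m) = 0) : k < (Function.support d).ncard := by
  classical
  by_contra! hk
  rw [Set.ncard_eq_toFinset_card'] at hk
  refine hd₀ (funext fun m => by_contra fun hm => hm ?_)
  rw [Pi.zero_apply] at hm ⊢
  refine eq_zero_of_sum_mul_pow_apply_eq_zero φ hv (Function.support d).toFinset (fun i hi => ?_) m
    (by simpa using hm)
  rw [sum_subset (subset_univ _) fun m _ hm => by simp_all]
  exact hd i (by omega)

end Moore

theorem LinearIndependent.fin_add_of_mod {R V : Type*} [Semiring R] [AddCommMonoid V]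
    [Module R V] {n : ℕ} {f : ℕ → V} (hf : ∀ k, f (k % n) = f k)
    (hli : LinearIndependent R fun i : Fin n => f i) (b : ℕ) :
    LinearIndependent R fun i : Fin n => f (b + i) := by
  have hinj : Function.Injective fun i : Fin n => (⟨(b + i) % n, Nat.mod_lt _ i.pos⟩ : Fin n) := by
    intro i j hij
    have h := Nat.ModEq.add_left_cancel' b (Fin.mk.inj hij)
    exact Fin.ext (by rwa [Nat.ModEq, Nat.mod_eq_of_lt i.isLt, Nat.mod_eq_of_lt j.isLt] at h)
  simpa only [Function.comp_def, hf] using hli.comp _ hinj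

theorem bch_bound_skew_general {M : Type*} [Field M] (θ : M ≃+* M) (n : ℕ)
    (hord : orderOf θ = n)
    (α : M) (hα : NormalBasis θ n α) (β : M) (hβ : β = α⁻¹ * θ α)
    (g : ℕ →₀ M)
    (b δ t : ℕ) (ht : Nat.gcd t n = 1)
    (hT : ∀ i ≤ δ - 2, rdvd θ (Xsub ((θ ^ ((b + i * t) % n)) β)) g)
    (c : Fin n → M)
    (hcC : rdvd θ g (vecPoly c)) (hc0 : c ≠ 0) :
    δ ≤ hWt c := by
  obtain ⟨j₀, -⟩ := Function.ne_iff.mp hc0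
  have hα₀ : α ≠ 0 := by simpa using hα.1.ne_zero ⟨0, j₀.pos⟩
  have hmod : ∀ k, θ ^ (k % n) = θ ^ k := fun k => by rw [← hord, pow_mod_orderOf]
  have hv : LinearIndependent (fixedSubfield (θ ^ t)) fun m : Fin n => (θ ^ (b + m)) α := by
    rw [fixedSubfield_pow_of_coprime θ (hord ▸ ht)]
    exact hα.1.fin_add_of_mod (f := fun k => (θ ^ k) α) (fun k => by rw [hmod]) b
  have hroots : ∀ i < δ - 1, ∑ m, c m * ((θ ^ t) ^ i) ((θ ^ (b + m)) α) = 0 := by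
    intro i hi
    have hβi : (θ ^ ((b + i * t) % n)) β = ((θ ^ (b + i * t)) α)⁻¹ * θ ((θ ^ (b + i * t)) α) := by
      rw [hmod, hβ, map_mul, map_inv₀, ← RingAut.mul_apply, ← RingAut.mul_apply, pow_mul_comm']
    convert sum_mul_pow_apply_eq_zero_of_rdvd θ ((map_ne_zero _).mpr hα₀)
      (hβi ▸ hT i (by omega)) hcC using 3 with m
    simp only [← RingAut.mul_apply, ← pow_mul, ← pow_add]
    ring_nf
  have := lt_ncard_support_of_sum_mul_pow_apply_eq_zero (θ ^ t) hv hc0 hroots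
  exact Nat.le_of_pred_lt this

/-- **BCH bound for skew cyclic codes.**
Setting as in the Hartmann–Tzeng bound: `θ` of order `n = μ·s`, `L = M^{θ^μ}`, `R = L[x;σ]`,
`α` generating a normal basis of `M/K` and `β = α⁻¹θ(α)`. If `g ∈ R` is a right divisor of
`xⁿ - 1` of degree `< n` and there are `b ≥ 0`, `2 ≤ δ ≤ n` and `t` with `gcd(t, n) = 1` such
that `{b, b+t, …, b+(δ-2)t mod n} ⊆ T_β(g)`, then every nonzero codeword of the skew cyclic
code `C ⊆ Lⁿ` defined by `g` has Hamming weight at least `δ`. -/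
theorem bch_bound_skew {M : Type*} [Field M] (θ : M ≃+* M) (μ s n : ℕ)
    (hμ : 0 < μ) (hs : 0 < s) (hn : n = μ * s) (hord : orderOf θ = n)
    (α : M) (hα : NormalBasis θ n α) (β : M) (hβ : β = α⁻¹ * θ α)
    (g : ℕ →₀ M) (hgR : inR (θ ^ μ) g)
    (hgdvd : rdvd θ g (XnSubOne n)) (hgdeg : ∀ j, n ≤ j → g j = 0)
    (b δ t : ℕ) (hδ : 2 ≤ δ) (hδn : δ ≤ n) (ht : Nat.gcd t n = 1)
    (hT : ∀ i ≤ δ - 2, rdvd θ (Xsub ((θ ^ ((b + i * t) % n)) β)) g)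
    (c : Fin n → M) (hcL : ∀ j, (θ ^ μ) (c j) = c j)
    (hcC : rdvd θ g (vecPoly c)) (hc0 : c ≠ 0) :
    δ ≤ hWt c :=
  bch_bound_skew_general θ n hord α hα β hβ g b δ t ht hT c hcC hc0
end

section
/- Extend π = θ^μ to a ring automorphism of S = M[x;θ] acting coefficientwise (Σ_i a_i x^i ↦ Σ_i π(a_i) x^i); its fixed ring is R = L[x;σ]. Then a nonzero left ideal I = Sf of S is π-invariant (π(I) = I) if and only if I = Sg for some g ∈ R; equivalently, if and only if the monic generator of I lies in R. -/
/-! Skew polynomials over a field `M` twisted by a ring automorphism `θ` (`x·a = θ(a)·x`),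
modeled as finitely supported functions `ℕ →₀ M` (coefficient of `xⁱ` at `i`),
with left-coefficient multiplication `(Σᵢ aᵢ xⁱ)·(Σⱼ bⱼ xʲ) = Σᵢⱼ aᵢ θⁱ(bⱼ) x^{i+j}`. -/

variable {M : Type*} [Field M]

/-! Since `π = θ^μ` commutes with `θ`, applying `π` coefficientwise is a ring automorphism of
`S = M[x;θ]`, and it maps `S·f` onto `S·π(f)`. If `I` is `π`-invariant, `π` therefore sends the
monic generator `h` of `I` to another monic generator `π(h)` of `I`, so `π(h) = h` by uniqueness of
the monic generator, i.e. `h ∈ R`. Conversely, a generator `g ∈ R` satisfies `π(g) = g`, whence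
`π(I) = S·π(g) = I`. -/

section SkewPolynomial

variable (θ : M ≃+* M)

lemma sMul_single_single (i j : ℕ) (a b : M) :
    sMul θ (Finsupp.single i a) (Finsupp.single j b)
      = Finsupp.single (i + j) (a * (θ ^ i) b) := by
  unfold sMul
  rw [Finsupp.sum_single_index (by simp), Finsupp.sum_single_index (by simp)]

lemma sMul_zero_left (f : ℕ →₀ M) : sMul θ 0 f = 0 := by
  simp [sMul]

lemma sMul_zero_right (f : ℕ →₀ M) : sMul θ f 0 = 0 := by
  simp [sMul]

lemma sMul_add_left (f g h : ℕ →₀ M) :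
    sMul θ (f + g) h = sMul θ f h + sMul θ g h := by
  unfold sMul
  rw [Finsupp.sum_add_index'] <;> simp [add_mul, Finsupp.single_add, Finsupp.sum_add]

lemma sMul_add_right (f g h : ℕ →₀ M) :
    sMul θ f (g + h) = sMul θ f g + sMul θ f h := by
  unfold sMul
  rw [← Finsupp.sum_add]
  congr 1
  ext i a
  rw [Finsupp.sum_add_index'] <;> simp [mul_add, Finsupp.single_add]

lemma sMul_assoc (f g h : ℕ →₀ M) :
    sMul θ (sMul θ f g) h = sMul θ f (sMul θ g h) := by
  induction f using Finsupp.induction_linear with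
  | zero => simp only [sMul_zero_left]
  | add f₁ f₂ h₁ h₂ => rw [sMul_add_left, sMul_add_left, sMul_add_left, h₁, h₂]
  | single i a =>
    induction g using Finsupp.induction_linear with
    | zero => simp only [sMul_zero_left, sMul_zero_right]
    | add g₁ g₂ h₁ h₂ =>
      rw [sMul_add_right, sMul_add_left, sMul_add_left, sMul_add_right, h₁, h₂]
    | single j b =>
      induction h using Finsupp.induction_linear with
      | zero => simp only [sMul_zero_right]
      | add h₁ h₂ ih₁ ih₂ =>
        rw [sMul_add_right, sMul_add_right, sMul_add_right, ih₁, ih₂]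
      | single k c =>
        simp only [sMul_single_single, map_mul, mul_assoc, add_assoc, pow_add, RingAut.mul_apply]

lemma sMul_single_zero_left (c : M) (f : ℕ →₀ M) : sMul θ (Finsupp.single 0 c) f = c • f := by
  unfold sMul
  rw [Finsupp.sum_single_index (by simp)]
  conv_rhs => rw [← Finsupp.sum_single f, Finsupp.smul_sum]
  refine Finset.sum_congr rfl fun j _ => ?_
  simp [Finsupp.smul_single]

lemma mem_lIdeal_self (f : ℕ →₀ M) : f ∈ lIdeal θ f :=
  ⟨Finsupp.single 0 1, by rw [sMul_single_zero_left, one_smul]⟩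

lemma lIdeal_sMul_subset (u f : ℕ →₀ M) : lIdeal θ (sMul θ u f) ⊆ lIdeal θ f := by
  rintro h ⟨q, rfl⟩
  exact ⟨sMul θ q u, by rw [sMul_assoc]⟩

lemma lIdeal_smul {c : M} (hc : c ≠ 0) (f : ℕ →₀ M) : lIdeal θ (c • f) = lIdeal θ f := by
  have hf : f = sMul θ (Finsupp.single 0 c⁻¹) (c • f) := by
    rw [sMul_single_zero_left, smul_smul, inv_mul_cancel₀ hc, one_smul]
  refine subset_antisymm ?_ ?_
  · rw [← sMul_single_zero_left]
    exact lIdeal_sMul_subset θ _ f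
  · conv_lhs => rw [hf]
    exact lIdeal_sMul_subset θ _ _

end SkewPolynomial

section Degree

lemma exists_ne_zero_forall_gt_eq_zero {f : ℕ →₀ M} (hf : f ≠ 0) :
    ∃ d, f d ≠ 0 ∧ ∀ j, d < j → f j = 0 := by
  have h : f.support.Nonempty := Finsupp.support_nonempty_iff.2 hf
  refine ⟨f.support.max' h, Finsupp.mem_support_iff.1 (f.support.max'_mem h), fun j hj => ?_⟩
  by_contra hj0
  exact (f.support.le_max' j (Finsupp.mem_support_iff.2 hj0)).not_gt hj

lemma sMul_apply_add (θ : M ≃+* M) {f g : ℕ →₀ M} {d e : ℕ}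
    (hf : ∀ j, d < j → f j = 0) (hg : ∀ j, e < j → g j = 0) :
    sMul θ f g (d + e) = f d * (θ ^ d) (g e) := by
  have hf' : ∀ i ∈ f.support, i ≤ d := fun i hi =>
    not_lt.1 fun hdi => Finsupp.mem_support_iff.1 hi (hf i hdi)
  have hg' : ∀ j ∈ g.support, j ≤ e := fun j hj =>
    not_lt.1 fun hej => Finsupp.mem_support_iff.1 hj (hg j hej)
  unfold sMul
  simp only [Finsupp.sum_apply, Finsupp.single_apply]
  rw [Finsupp.sum, Finset.sum_eq_single d]
  · rw [Finsupp.sum, Finset.sum_eq_single e]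
    · rw [if_pos rfl]
    · intro j hj hje
      rw [if_neg (by have := hg' j hj; omega)]
    · intro he
      simp [Finsupp.notMem_support_iff.1 he]
  · intro i hi hid
    refine Finset.sum_eq_zero fun j hj => if_neg ?_
    have := hf' i hi
    have := hg' j hj
    omega
  · intro hd
    simp [Finsupp.notMem_support_iff.1 hd]

lemma exists_add_le_of_sMul_isMonicAt (θ : M ≃+* M) {q h : ℕ →₀ M} {d e : ℕ} (hq : q ≠ 0)
    (hh : IsMonicAt h e) (hd : ∀ j, d < j → sMul θ q h j = 0) :
    ∃ k, k + e ≤ d ∧ ∀ j, k < j → q j = 0 := by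
  obtain ⟨k, hk, hk'⟩ := exists_ne_zero_forall_gt_eq_zero hq
  refine ⟨k, not_lt.1 fun hlt => hk ?_, hk'⟩
  simpa [sMul_apply_add θ hk' hh.2, hh.1] using hd _ hlt

lemma IsMonicAt.ne_zero {h : ℕ →₀ M} {d : ℕ} (hh : IsMonicAt h d) : h ≠ 0 := by
  rintro rfl
  simp [IsMonicAt] at hh

lemma eq_of_isMonic_of_lIdeal_eq (θ : M ≃+* M) {h h' : ℕ →₀ M} (mh : IsMonic h)
    (mh' : IsMonic h') (heq : lIdeal θ h = lIdeal θ h') : h = h' := by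
  obtain ⟨d, hd⟩ := mh
  obtain ⟨d', hd'⟩ := mh'
  obtain ⟨q, hq⟩ : h ∈ lIdeal θ h' := heq ▸ mem_lIdeal_self θ h
  obtain ⟨q', hq'⟩ : h' ∈ lIdeal θ h := heq ▸ mem_lIdeal_self θ h'
  have hq0 : q ≠ 0 := by rintro rfl; exact hd.ne_zero (by rw [hq, sMul_zero_left])
  have hq'0 : q' ≠ 0 := by rintro rfl; exact hd'.ne_zero (by rw [hq', sMul_zero_left])
  obtain ⟨k, hkd, hk⟩ := exists_add_le_of_sMul_isMonicAt θ hq0 hd' (hq ▸ hd.2)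
  obtain ⟨k', hkd', -⟩ := exists_add_le_of_sMul_isMonicAt θ hq'0 hd (hq' ▸ hd'.2)
  obtain ⟨rfl, rfl⟩ : k = 0 ∧ d = d' := by omega
  have hq_const : q = Finsupp.single 0 1 := by
    ext j
    rcases Nat.eq_zero_or_pos j with rfl | hj
    · have htop := sMul_apply_add θ hk hd'.2
      rw [zero_add, ← hq, hd.1, hd'.1, map_one, mul_one] at htop
      simp [← htop]
    · simp [hk j hj, hj.ne']
  rw [hq, hq_const, sMul_single_zero_left, one_smul]

lemma exists_isMonic_lIdeal_eq (θ : M ≃+* M) {f : ℕ →₀ M} (hf : f ≠ 0) :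
    ∃ h, IsMonic h ∧ lIdeal θ h = lIdeal θ f := by
  obtain ⟨d, hd, hd'⟩ := exists_ne_zero_forall_gt_eq_zero hf
  refine ⟨(f d)⁻¹ • f, ⟨d, ?_, fun j hj => ?_⟩, lIdeal_smul θ (inv_ne_zero hd) f⟩
  · rw [Finsupp.smul_apply, smul_eq_mul, inv_mul_cancel₀ hd]
  · rw [Finsupp.smul_apply, hd' j hj, smul_zero]

end Degree

section CoefficientMap

variable (φ : M ≃+* M)

lemma pmap_apply (f : ℕ →₀ M) (j : ℕ) : pmap φ f j = φ (f j) :=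
  Finsupp.mapRange_apply

lemma pmap_zero : pmap φ (0 : ℕ →₀ M) = 0 :=
  Finsupp.mapRange_zero

lemma pmap_add (f g : ℕ →₀ M) : pmap φ (f + g) = pmap φ f + pmap φ g :=
  Finsupp.mapRange_add' f g

lemma pmap_single (i : ℕ) (a : M) : pmap φ (Finsupp.single i a) = Finsupp.single i (φ a) :=
  Finsupp.mapRange_single

lemma pmap_pmap_symm (f : ℕ →₀ M) : pmap φ (pmap φ.symm f) = f := by
  ext j
  simp [pmap_apply]

lemma inR_iff_pmap_eq (f : ℕ →₀ M) : inR φ f ↔ pmap φ f = f := by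
  simp only [inR, Finsupp.ext_iff, pmap_apply]

lemma IsMonicAt.pmap {h : ℕ →₀ M} {d : ℕ} (hh : IsMonicAt h d) : IsMonicAt (pmap φ h) d :=
  ⟨by rw [pmap_apply, hh.1, map_one], fun j hj => by rw [pmap_apply, hh.2 j hj, map_zero]⟩

variable {φ} {θ : M ≃+* M}

lemma pmap_sMul (hφ : Commute φ θ) (f g : ℕ →₀ M) :
    pmap φ (sMul θ f g) = sMul θ (pmap φ f) (pmap φ g) := by
  induction f using Finsupp.induction_linear with
  | zero => rw [sMul_zero_left, pmap_zero, sMul_zero_left]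
  | add f₁ f₂ h₁ h₂ => rw [sMul_add_left, pmap_add, pmap_add, h₁, h₂, sMul_add_left]
  | single i a =>
    induction g using Finsupp.induction_linear with
    | zero => rw [sMul_zero_right, pmap_zero, sMul_zero_right]
    | add g₁ g₂ h₁ h₂ => rw [sMul_add_right, pmap_add, pmap_add, h₁, h₂, sMul_add_right]
    | single j b =>
      have hφi : φ ((θ ^ i) b) = (θ ^ i) (φ b) := congrArg (· b) (hφ.pow_right i).eq
      rw [sMul_single_single, pmap_single, pmap_single, pmap_single, sMul_single_single, map_mul,
        hφi]

lemma image_pmap_lIdeal (hφ : Commute φ θ) (f : ℕ →₀ M) :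
    pmap φ '' lIdeal θ f = lIdeal θ (pmap φ f) := by
  ext h
  constructor
  · rintro ⟨-, ⟨q, rfl⟩, rfl⟩
    exact ⟨pmap φ q, pmap_sMul hφ q f⟩
  · rintro ⟨q, rfl⟩
    refine ⟨sMul θ (pmap φ.symm q) f, ⟨pmap φ.symm q, rfl⟩, ?_⟩
    rw [pmap_sMul hφ, pmap_pmap_symm]

lemma inR_of_image_pmap_lIdeal_eq (hφ : Commute φ θ) {f h : ℕ →₀ M}
    (hinv : pmap φ '' lIdeal θ f = lIdeal θ f) (mh : IsMonic h) (hh : lIdeal θ h = lIdeal θ f) :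
    inR φ h := by
  obtain ⟨d, hd⟩ := mh
  have hgen : lIdeal θ (pmap φ h) = lIdeal θ h := by
    rw [← image_pmap_lIdeal hφ, hh, hinv]
  exact (inR_iff_pmap_eq φ h).2 (eq_of_isMonic_of_lIdeal_eq θ ⟨d, hd.pmap φ⟩ ⟨d, hd⟩ hgen)

lemma image_pmap_lIdeal_eq_of_inR (hφ : Commute φ θ) {f g : ℕ →₀ M} (hg : inR φ g)
    (hfg : lIdeal θ f = lIdeal θ g) : pmap φ '' lIdeal θ f = lIdeal θ f := by
  rw [hfg, image_pmap_lIdeal hφ, (inR_iff_pmap_eq φ g).1 hg]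

end CoefficientMap

theorem pi_invariant_left_ideal_iff_general {M : Type*} [Field M] (θ : M ≃+* M) (μ : ℕ)
    (f : ℕ →₀ M) (hf : f ≠ 0) :
    ((pmap (θ ^ μ) '' lIdeal θ f = lIdeal θ f) ↔
      ∃ g : ℕ →₀ M, inR (θ ^ μ) g ∧ lIdeal θ f = lIdeal θ g) ∧
    ((pmap (θ ^ μ) '' lIdeal θ f = lIdeal θ f) ↔
      ∀ h : ℕ →₀ M, IsMonic h → lIdeal θ h = lIdeal θ f → inR (θ ^ μ) h) := by
  have hπ : Commute (θ ^ μ) θ := Commute.pow_self θ μ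
  obtain ⟨h₀, mh₀, hh₀⟩ := exists_isMonic_lIdeal_eq θ hf
  have monic_mem_R : pmap (θ ^ μ) '' lIdeal θ f = lIdeal θ f →
      ∀ h, IsMonic h → lIdeal θ h = lIdeal θ f → inR (θ ^ μ) h :=
    fun hinv _ => inR_of_image_pmap_lIdeal_eq hπ hinv
  have invariant : (∃ g, inR (θ ^ μ) g ∧ lIdeal θ f = lIdeal θ g) →
      pmap (θ ^ μ) '' lIdeal θ f = lIdeal θ f :=
    fun ⟨_, hg, hfg⟩ => image_pmap_lIdeal_eq_of_inR hπ hg hfg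
  exact ⟨⟨fun hinv => ⟨h₀, monic_mem_R hinv h₀ mh₀ hh₀, hh₀.symm⟩, invariant⟩,
    ⟨monic_mem_R, fun hall => invariant ⟨h₀, hall h₀ mh₀ hh₀, hh₀.symm⟩⟩⟩

/-- Setting: `θ` of order `n = μ·s`, `π = θ^μ` extended coefficientwise to
`S = M[x;θ]`, with fixed ring `R = L[x;σ]`, `L = M^π`. A nonzero left ideal `I = S·f` of `S`
is `π`-invariant (`π(I) = I`) if and only if `I = S·g` for some `g ∈ R`; equivalently, if and
only if every monic generator of `I` lies in `R`. -/
theorem pi_invariant_left_ideal_iff {M : Type*} [Field M] (θ : M ≃+* M) (μ s n : ℕ)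
    (hμ : 0 < μ) (hs : 0 < s) (hn : n = μ * s) (hord : orderOf θ = n)
    (f : ℕ →₀ M) (hf : f ≠ 0) :
    ((pmap (θ ^ μ) '' lIdeal θ f = lIdeal θ f) ↔
      ∃ g : ℕ →₀ M, inR (θ ^ μ) g ∧ lIdeal θ f = lIdeal θ g) ∧
    ((pmap (θ ^ μ) '' lIdeal θ f = lIdeal θ f) ↔
      ∀ h : ℕ →₀ M, IsMonic h → lIdeal θ h = lIdeal θ f → inR (θ ^ μ) h) :=
  pi_invariant_left_ideal_iff_general θ μ f hf
end
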